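/- arXiv:2303.10366 — 4 statements merged into one kernel-verified Lean document; each statement's English description precedes it below -/
import Mathlib

section
/- (Proposition: at least one and at most two nominees.) Let n ≥ 1 and let θ : Fin n → ℝ be an aperiodic gap sequence. Then the set of nominees {i : Fin n | s_i = M ∨ t_i = M} is nonempty and has cardinality at most 2. -/
/-- The rotation of a gap sequence `θ : Fin n → ℝ` by `k`: `rot k θ = fun j => θ (j + k)`. -/
def rot {n : ℕ} (k : Fin n) (θ : Fin n → ℝ) : Fin n → ℝ := fun j => θ (j + k)

/-- A gap sequence is aperiodic if no nontrivial rotation fixes it. -/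
def Aperiodic {n : ℕ} [NeZero n] (θ : Fin n → ℝ) : Prop :=
  ∀ k : Fin n, k ≠ 0 → rot k θ ≠ θ

/-- Forward angle sequence of robot `i`: `s_i = fun j => θ (i + j)`. -/
def fwd {n : ℕ} (θ : Fin n → ℝ) (i : Fin n) : Fin n → ℝ := fun j => θ (i + j)

/-- Backward angle sequence of robot `i`: `t_i = fun j => θ (i - 1 - j)`. -/
def bwd {n : ℕ} [NeZero n] (θ : Fin n → ℝ) (i : Fin n) : Fin n → ℝ := fun j => θ (i - 1 - j)

lemma fwd_inj {n : ℕ} [NeZero n] (θ : Fin n → ℝ) (hθ : Aperiodic θ) :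
    Function.Injective (fwd θ) := by
  intro i i' h
  by_contra hne
  apply hθ (i' - i) (sub_ne_zero.mpr (Ne.symm hne))
  funext j
  have := congrFun h (j - i)
  simp only [fwd] at this
  rw [show i + (j - i) = j by abel, show i' + (j - i) = j + (i' - i) by abel] at this
  exact this.symm

lemma bwd_inj {n : ℕ} [NeZero n] (θ : Fin n → ℝ) (hθ : Aperiodic θ) :
    Function.Injective (bwd θ) := by
  intro i i' h
  by_contra hne
  apply hθ (i' - i) (sub_ne_zero.mpr (Ne.symm hne))
  funext j
  have := congrFun h (i - 1 - j)
  simp only [bwd] at this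
  rw [show i - 1 - (i - 1 - j) = j by abel,
      show i' - 1 - (i - 1 - j) = j + (i' - i) by abel] at this
  exact this.symm

/-- In an aperiodic configuration there are at least one and at most two nominees,
where `M` is the lexicographic minimum of the `2n` angle sequences and a nominee
is a robot whose forward or backward angle sequence equals `M`. -/
theorem nominees_nonempty_card_le_two {n : ℕ} [NeZero n] (θ : Fin n → ℝ)
    (hθ : Aperiodic θ) (M : Lex (Fin n → ℝ))
    (hM : IsLeast ((Set.range fun i : Fin n => toLex (fwd θ i)) ∪
                   (Set.range fun i : Fin n => toLex (bwd θ i))) M) :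
    {i : Fin n | toLex (fwd θ i) = M ∨ toLex (bwd θ i) = M}.Nonempty ∧
    {i : Fin n | toLex (fwd θ i) = M ∨ toLex (bwd θ i) = M}.ncard ≤ 2 := by
  constructor
  · rcases hM.1 with ⟨i, hi⟩ | ⟨i, hi⟩
    · exact ⟨i, Or.inl hi⟩
    · exact ⟨i, Or.inr hi⟩
  · have hsub : {i : Fin n | toLex (fwd θ i) = M ∨ toLex (bwd θ i) = M} =
        {i : Fin n | toLex (fwd θ i) = M} ∪ {i : Fin n | toLex (bwd θ i) = M} := rfl
    rw [hsub]
    have h1 : {i : Fin n | toLex (fwd θ i) = M}.Subsingleton := by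
      intro a ha b hb
      exact fwd_inj θ hθ (toLex.injective (ha.trans hb.symm))
    have h2 : {i : Fin n | toLex (bwd θ i) = M}.Subsingleton := by
      intro a ha b hb
      exact bwd_inj θ hθ (toLex.injective (ha.trans hb.symm))
    calc _ ≤ {i : Fin n | toLex (fwd θ i) = M}.ncard +
             {i : Fin n | toLex (bwd θ i) = M}.ncard := Set.ncard_union_le _ _
      _ ≤ 1 + 1 := Nat.add_le_add ((Set.ncard_le_one (Set.toFinite _)).mpr fun a ha b hb => h1 ha hb)
            ((Set.ncard_le_one (Set.toFinite _)).mpr fun a ha b hb => h2 ha hb)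
      _ = 2 := rfl
end

section
/- (No two robots attain the minimum angle sequence in the same direction.) Let n ≥ 1, let θ : Fin n → ℝ be an aperiodic gap sequence, and let i, j ∈ Fin n with i ≠ j. Then it is not the case that s_i = M and s_j = M, and it is not the case that t_i = M and t_j = M. Consequently, if i and j are two distinct nominees, then one of them attains the lexicographic minimum M by its forward sequence and the other by its backward sequence. -/
section GapSequence

variable {n : ℕ} {θ : Fin n → ℝ}

lemma fwd_eq_rot (θ : Fin n → ℝ) (i : Fin n) : fwd θ i = rot i θ :=
  funext fun j => congrArg θ (add_comm i j)

variable [NeZero n]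

lemma rot_sub_eq_self_of_rot_eq {k l : Fin n} (h : rot k θ = rot l θ) : rot (k - l) θ = θ := by
  funext j
  rw [rot, show j + (k - l) = j - l + k by abel]
  simpa only [rot, sub_add_cancel] using congrFun h (j - l)

lemma Aperiodic.rot_injective (hθ : Aperiodic θ) : Function.Injective fun k => rot k θ :=
  fun _ _ h => by_contra fun hkl => hθ _ (sub_ne_zero.mpr hkl) (rot_sub_eq_self_of_rot_eq h)

lemma Aperiodic.fwd_injective (hθ : Aperiodic θ) : Function.Injective (fwd θ) :=
  fun i j h => hθ.rot_injective (by simpa only [fwd_eq_rot] using h)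

lemma Aperiodic.comp_neg (hθ : Aperiodic θ) : Aperiodic fun j => θ (-j) := by
  intro k hk hrot
  refine hθ (-k) (neg_ne_zero.mpr hk) (funext fun j => ?_)
  rw [rot, ← neg_neg (j + -k), neg_add, neg_neg]
  simpa only [rot, neg_neg] using congrFun hrot (-j)

lemma bwd_eq_fwd_comp_neg (θ : Fin n → ℝ) (i : Fin n) :
    bwd θ i = fwd (fun j => θ (-j)) (1 - i) :=
  funext fun j => congrArg θ (by abel)

lemma Aperiodic.bwd_injective (hθ : Aperiodic θ) : Function.Injective (bwd θ) := by
  intro i j h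
  simp only [bwd_eq_fwd_comp_neg] at h
  exact sub_right_injective (hθ.comp_neg.fwd_injective h)

end GapSequence

theorem no_two_nominees_same_direction_general {n : ℕ} [NeZero n] (θ : Fin n → ℝ)
    (hθ : Aperiodic θ) (M : Lex (Fin n → ℝ))
    (i j : Fin n) (hij : i ≠ j) :
    ¬(toLex (fwd θ i) = M ∧ toLex (fwd θ j) = M) ∧
    ¬(toLex (bwd θ i) = M ∧ toLex (bwd θ j) = M) ∧
    (((toLex (fwd θ i) = M ∨ toLex (bwd θ i) = M) ∧
      (toLex (fwd θ j) = M ∨ toLex (bwd θ j) = M)) →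
      ((toLex (fwd θ i) = M ∧ toLex (bwd θ j) = M) ∨
       (toLex (bwd θ i) = M ∧ toLex (fwd θ j) = M))) := by
  have hfwd : ¬(toLex (fwd θ i) = M ∧ toLex (fwd θ j) = M) := fun ⟨hi, hj⟩ =>
    hij (hθ.fwd_injective (toLex.injective (hi.trans hj.symm)))
  have hbwd : ¬(toLex (bwd θ i) = M ∧ toLex (bwd θ j) = M) := fun ⟨hi, hj⟩ =>
    hij (hθ.bwd_injective (toLex.injective (hi.trans hj.symm)))
  refine ⟨hfwd, hbwd, ?_⟩
  rintro ⟨hi | hi, hj | hj⟩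
  · exact absurd ⟨hi, hj⟩ hfwd
  · exact Or.inl ⟨hi, hj⟩
  · exact Or.inr ⟨hi, hj⟩
  · exact absurd ⟨hi, hj⟩ hbwd

/-- No two distinct robots attain the lexicographic minimum angle sequence `M` in the same
direction; consequently, two distinct nominees attain `M` in opposite directions. -/
theorem no_two_nominees_same_direction {n : ℕ} [NeZero n] (θ : Fin n → ℝ)
    (hθ : Aperiodic θ) (M : Lex (Fin n → ℝ))
    (hM : IsLeast ((Set.range fun i : Fin n => toLex (fwd θ i)) ∪
                   (Set.range fun i : Fin n => toLex (bwd θ i))) M)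
    (i j : Fin n) (hij : i ≠ j) :
    ¬(toLex (fwd θ i) = M ∧ toLex (fwd θ j) = M) ∧
    ¬(toLex (bwd θ i) = M ∧ toLex (bwd θ j) = M) ∧
    (((toLex (fwd θ i) = M ∨ toLex (bwd θ i) = M) ∧
      (toLex (fwd θ j) = M ∨ toLex (bwd θ j) = M)) →
      ((toLex (fwd θ i) = M ∧ toLex (bwd θ j) = M) ∨
       (toLex (bwd θ i) = M ∧ toLex (fwd θ j) = M))) :=
  no_two_nominees_same_direction_general θ hθ M i j hij
end

section
/- (Uniqueness of the pivotal direction.) Let n ≥ 2 and let θ : Fin n → ℝ be an aperiodic gap sequence with θ i > 0 for every i. Then there is no index i ∈ Fin n such that both s_i = M and t_i = M; i.e., no robot attains the lexicographic minimum angle sequence in both directions, so the direction in which the leader has its minimum angle sequence is unique. -/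
/-!
If `s_i = t_i = M`, then `σ := s_i` is a rotation-minimal sequence (so `σ 0` is its least entry)
with `σ (-1) = t_i 0 = σ 0`. Shifting such a sequence one step to the right never makes it
lexicographically larger: the shifted sequence starts with the least entry `σ (-1)` and then agrees
with `σ` as long as `σ` keeps that least value. Hence `rot (-1) σ = σ`, contradicting aperiodicity.
-/

theorem rot_fwd {n : ℕ} (θ : Fin n → ℝ) (i k : Fin n) : rot k (fwd θ i) = fwd θ (i + k) := by
  funext j
  show θ (i + (j + k)) = θ (i + k + j)
  rw [add_assoc, add_comm j]

theorem Aperiodic.fwd {n : ℕ} [NeZero n] {θ : Fin n → ℝ} (hθ : Aperiodic θ) (i : Fin n) :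
    Aperiodic (fwd θ i) := by
  intro k hk hfix
  refine hθ k hk (funext fun m => ?_)
  simpa [rot, _root_.fwd, ← add_assoc] using congrFun hfix (m - i)

theorem fwd_neg_one_eq_fwd_zero {n : ℕ} [NeZero n] {θ : Fin n → ℝ} {i : Fin n}
    (h : fwd θ i = bwd θ i) : fwd θ i (-1) = fwd θ i 0 := by
  simpa [fwd, bwd, sub_eq_add_neg] using (congrFun h 0).symm

theorem apply_zero_le_of_forall_toLex_le_rot {n : ℕ} [NeZero n] {σ : Fin n → ℝ}
    (hmin : ∀ k, toLex σ ≤ toLex (rot k σ)) (k : Fin n) : σ 0 ≤ σ k := by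
  simpa [rot] using Pi.apply_le_of_toLex (hmin k) (i := 0) (by simp)

open Fin.NatCast in
theorem toLex_rot_neg_one_le {n : ℕ} [NeZero n] {σ : Fin n → ℝ} (hmin : ∀ k, σ 0 ≤ σ k)
    (hlast : σ (-1) = σ 0) : toLex (rot (-1) σ) ≤ toLex σ := by
  by_contra! hlt
  obtain ⟨j, hagree, hj⟩ := hlt
  simp only [rot, Pi.toLex_apply] at hagree hj
  have hconst : ∀ k : ℕ, k ≤ j.val → σ ((k : Fin n) + -1) = σ 0 := by
    intro k
    induction k with
    | zero => simpa using hlast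
    | succ k ih =>
      intro hk
      have hkj : (k : Fin n) < j := by
        rw [Fin.lt_def, Fin.val_natCast, Nat.mod_eq_of_lt (by omega)]
        omega
      rw [Nat.cast_succ, add_neg_cancel_right, hagree _ hkj, ih (by omega)]
  have hprev : σ (j + -1) = σ 0 := by simpa using hconst j.val le_rfl
  exact (hmin j).not_gt (hprev ▸ hj)

theorem pivotal_direction_unique_general {n : ℕ} [NeZero n] (hn : 2 ≤ n) (θ : Fin n → ℝ)
    (hθ : Aperiodic θ) (M : Lex (Fin n → ℝ))
    (hM : IsLeast ((Set.range fun i : Fin n => toLex (fwd θ i)) ∪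
                   (Set.range fun i : Fin n => toLex (bwd θ i))) M) :
    ¬ ∃ i : Fin n, toLex (fwd θ i) = M ∧ toLex (bwd θ i) = M := by
  rintro ⟨i, hs, ht⟩
  set σ := fwd θ i
  have hmin : ∀ k, toLex σ ≤ toLex (rot k σ) := fun k => by
    rw [rot_fwd, hs]
    exact hM.2 (Or.inl ⟨i + k, rfl⟩)
  have hlast : σ (-1) = σ 0 := fwd_neg_one_eq_fwd_zero (toLex.injective (hs.trans ht.symm))
  have hfix : rot (-1) σ = σ := toLex.injective <|
    (toLex_rot_neg_one_le (apply_zero_le_of_forall_toLex_le_rot hmin) hlast).antisymm (hmin _)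
  have hneg : (-1 : Fin n) ≠ 0 := by
    rw [neg_ne_zero, Ne, Fin.ext_iff, Fin.val_one', Fin.val_zero, Nat.mod_eq_of_lt hn]
    exact one_ne_zero
  exact hθ.fwd i (-1) hneg hfix

/-- Uniqueness of the pivotal direction: no robot attains the lexicographic minimum
angle sequence `M` in both directions. -/
theorem pivotal_direction_unique {n : ℕ} [NeZero n] (hn : 2 ≤ n) (θ : Fin n → ℝ)
    (hpos : ∀ i, 0 < θ i) (hθ : Aperiodic θ) (M : Lex (Fin n → ℝ))
    (hM : IsLeast ((Set.range fun i : Fin n => toLex (fwd θ i)) ∪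
                   (Set.range fun i : Fin n => toLex (bwd θ i))) M) :
    ¬ ∃ i : Fin n, toLex (fwd θ i) = M ∧ toLex (bwd θ i) = M :=
  pivotal_direction_unique_general hn θ hθ M hM
end

section
/- (Rotational symmetry of a configuration corresponds to periodicity of its gap sequence.) Let n ≥ 1 and let x : Fin n → ℝ be strictly increasing with x (n−1) − x 0 < 2π, giving n distinct points p_i := exp(I·(x i)) on the unit circle in ℂ, and let S := {p_i : i ∈ Fin n}. Define the gap sequence θ : Fin n → ℝ by θ i = x (i+1) − x i for i < n−1 and θ (n−1) = 2π − (x (n−1) − x 0). Then there exists u ∈ ℂ with u ≠ 1 and {u·z : z ∈ S} = S (i.e., the configuration is rotationally symmetric) if and only if there exists k ∈ Fin n with k ≠ 0 and rot_k θ = θ (i.e., the gap sequence has a nontrivial cyclic period). -/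
/-!
The gap `θ i` is the counterclockwise arc length from `x i` to the next point `x (i + 1)`, and
`i + 1` is the unique point at that shortest distance from `i`. A rotation of the circle that
preserves the configuration preserves arc lengths, hence commutes with "next point" and is
therefore a cyclic shift `i ↦ i + k` of the indices which preserves the gaps. Conversely, if
`θ` has period `k`, summing gaps shows that `x (j + k) - x j` is constant modulo `2π`, so the
rotation by `x k - x 0` maps the point `j` to the point `j + k`.
-/

open Complex

open Function Set
open scoped Real

lemma exp_I_mul_eq_exp_I_mul_iff {a b : ℝ} :
    exp (I * a) = exp (I * b) ↔ (a : Real.Angle) = b := by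
  rw [exp_eq_exp_iff_exists_int, Real.Angle.angle_eq_iff_two_pi_dvd_sub]
  refine exists_congr fun k => ⟨fun h => ?_, fun h => ?_⟩
  · have h' : I * ((a - b - 2 * π * k : ℝ) : ℂ) = 0 := by push_cast; linear_combination h
    have h'' : a - b - 2 * π * k = 0 := by
      exact_mod_cast (mul_eq_zero.1 h').resolve_left I_ne_zero
    linarith
  · rw [sub_eq_iff_eq_add'] at h
    rw [h]; push_cast; ring

/-- The length of the counterclockwise arc from `exp (I * a)` to `exp (I * b)`, in `(0, 2π]`. -/
noncomputable def arcLen (a b : ℝ) : ℝ := toIocMod Real.two_pi_pos 0 (b - a)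

lemma arcLen_eq_arcLen_iff {a b c d : ℝ} :
    arcLen a b = arcLen c d ↔ ((b - a : ℝ) : Real.Angle) = (d - c : ℝ) := by
  rw [arcLen, arcLen, toIocMod_eq_toIocMod, eq_comm, Real.Angle.angle_eq_iff_two_pi_dvd_sub]
  simp only [zsmul_eq_mul, mul_comm]

lemma arcLen_of_lt {a b : ℝ} (hab : a < b) (hba : b ≤ a + 2 * π) : arcLen a b = b - a :=
  (toIocMod_eq_self _).2 ⟨by linarith, by linarith⟩

lemma arcLen_of_le {a b : ℝ} (hba : b ≤ a) (hab : a < b + 2 * π) :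
    arcLen a b = b - a + 2 * π := by
  rw [arcLen, ← toIocMod_add_right, toIocMod_eq_self]
  constructor <;> linarith

noncomputable def gapSeq {n : ℕ} [NeZero n] (x : Fin n → ℝ) (i : Fin n) : ℝ :=
  arcLen (x i) (x (i + 1))

lemma exists_surjective_of_image_range_eq {ι α : Type*} {g : α → α} {p : ι → α}
    (hp : Injective p) (h : g '' range p = range p) :
    ∃ f : ι → ι, Surjective f ∧ ∀ i, p (f i) = g (p i) := by
  have hmem : ∀ i, ∃ j, p j = g (p i) := fun i => by
    rw [← mem_range, ← h]; exact mem_image_of_mem g (mem_range_self i)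
  choose f hf using hmem
  refine ⟨f, fun j => ?_, hf⟩
  obtain ⟨_, ⟨i, rfl⟩, hi⟩ : p j ∈ g '' range p := by rw [h]; exact mem_range_self j
  exact ⟨i, hp (by rw [hf, hi])⟩

lemma Fin.apply_eq_apply_zero_of_apply_add_one {α : Type*} {n : ℕ} [NeZero n] {F : Fin n → α}
    (h : ∀ j, F (j + 1) = F j) (j : Fin n) : F j = F 0 := by
  obtain ⟨m, rfl⟩ := Nat.exists_eq_succ_of_ne_zero (NeZero.ne n)
  induction j using Fin.induction with
  | zero => rfl
  | succ i ih => rw [← Fin.coeSucc_eq_succ, h, ih]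

lemma map_add_one_of_surjective {n : ℕ} [NeZero n] {d : Fin n → Fin n → ℝ}
    (hnext : ∀ i j, j ≠ i + 1 → d i (i + 1) < d i j) {f : Fin n → Fin n} (hf : Surjective f)
    (hd : ∀ i j, d (f i) (f j) = d i j) (i : Fin n) : f (i + 1) = f i + 1 := by
  by_contra hne
  obtain ⟨j, hj⟩ := hf (f i + 1)
  have h₁ : d i j < d i (i + 1) := by
    simpa only [← hj, hd] using hnext (f i) (f (i + 1)) hne
  have hji : j = i + 1 := by_contra fun h => (h₁.trans (hnext i j h)).false
  exact hne (hji ▸ hj)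

section Rotation

variable {n : ℕ} [NeZero n] {x : Fin n → ℝ}

lemma exists_rot_gapSeq_eq_of_image_eq (hinj : Injective fun i => exp (I * x i))
    (hnext : ∀ i j, j ≠ i + 1 → gapSeq x i < arcLen (x i) (x j)) {u : ℂ} (hu : u ≠ 1)
    (hS : (fun z => u * z) '' range (fun i => exp (I * x i)) = range fun i => exp (I * x i)) :
    ∃ k, k ≠ 0 ∧ rot k (gapSeq x) = gapSeq x := by
  obtain ⟨f, hf_surj, hf⟩ := exists_surjective_of_image_range_eq hinj hS
  have hd : ∀ i j, arcLen (x (f i)) (x (f j)) = arcLen (x i) (x j) := by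
    intro i j
    have h : exp (I * ↑(x (f j) + x i)) = exp (I * ↑(x j + x (f i))) := by
      push_cast
      simp only [mul_add, Complex.exp_add, hf]
      ring
    rw [arcLen_eq_arcLen_iff, Real.Angle.coe_sub, Real.Angle.coe_sub, sub_eq_sub_iff_add_eq_add,
      ← Real.Angle.coe_add, ← Real.Angle.coe_add]
    exact exp_I_mul_eq_exp_I_mul_iff.1 h
  have hsucc := map_add_one_of_surjective (d := fun i j => arcLen (x i) (x j)) hnext hf_surj hd
  have hshift : ∀ j, f j = j + f 0 := fun j => by
    simpa [sub_eq_iff_eq_add, add_comm] using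
      Fin.apply_eq_apply_zero_of_apply_add_one (F := fun j => f j - j)
        (fun j => by simp only [hsucc]; abel) j
  refine ⟨f 0, fun h0 => hu ?_, funext fun j => ?_⟩
  · have h := hf 0
    rw [h0] at h
    exact (mul_eq_right₀ (exp_ne_zero _)).1 h.symm
  · simp only [rot, gapSeq, ← hshift, ← hsucc, hd]

lemma exists_image_eq_of_rot_gapSeq_eq (hinj : Injective fun i => exp (I * x i)) {k : Fin n}
    (hk : k ≠ 0) (hper : rot k (gapSeq x) = gapSeq x) :
    ∃ u : ℂ, u ≠ 1 ∧
      (fun z => u * z) '' range (fun i => exp (I * x i)) = range fun i => exp (I * x i) := by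
  have hstep : ∀ j,
      ((x (j + 1 + k) - x (j + 1) : ℝ) : Real.Angle) = (x (j + k) - x j : ℝ) := by
    intro j
    have h := arcLen_eq_arcLen_iff.1 (congrFun hper j)
    rw [add_right_comm]
    simp only [Real.Angle.coe_sub] at h ⊢
    rw [← sub_eq_zero] at h ⊢
    rw [← h]
    abel
  have hrot : ∀ j, exp (I * ↑(x k - x 0)) * exp (I * x j) = exp (I * x (j + k)) := by
    intro j
    rw [← Complex.exp_add, ← mul_add, ← ofReal_add, exp_I_mul_eq_exp_I_mul_iff]
    have h := Fin.apply_eq_apply_zero_of_apply_add_one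
      (F := fun j => ((x (j + k) - x j : ℝ) : Real.Angle)) hstep j
    rw [zero_add] at h
    simp only [Real.Angle.coe_sub, Real.Angle.coe_add] at h ⊢
    rw [← h]
    abel
  refine ⟨exp (I * ↑(x k - x 0)), fun hu => hk (hinj ?_), ?_⟩
  · have h := hrot 0
    rw [hu, one_mul, zero_add] at h
    exact h.symm
  · rw [← range_comp]
    simp only [comp_def, hrot]
    exact (add_right_surjective k).range_comp fun i => exp (I * x i)

end Rotation

section Configuration

variable {m : ℕ} {x : Fin (m + 1) → ℝ}

lemma sub_lt_two_pi (hx : StrictMono x) (hspan : x (Fin.last m) - x 0 < 2 * π)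
    (i j : Fin (m + 1)) : x j - x i < 2 * π := by
  linarith [hx.monotone (Fin.le_last j), hx.monotone (Fin.zero_le i)]

lemma injective_exp_I_mul (hx : StrictMono x) (hspan : x (Fin.last m) - x 0 < 2 * π) :
    Injective fun i => exp (I * x i) := by
  intro i j h
  have hmem : ∀ k, x k ∈ Icc (x 0) (x (Fin.last m)) := fun k =>
    ⟨hx.monotone (Fin.zero_le k), hx.monotone (Fin.le_last k)⟩
  refine hx.injective (Circle.exp_injOn_Icc (by linarith) (hmem i) (hmem j) ?_)
  ext1
  simpa only [Circle.coe_exp, mul_comm] using h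

lemma gapSeq_lt_arcLen (hx : StrictMono x) (hspan : x (Fin.last m) - x 0 < 2 * π)
    {i j : Fin (m + 1)} (hj : j ≠ i + 1) :
    gapSeq x i < arcLen (x i) (x j) := by
  have hlt := sub_lt_two_pi hx hspan
  rcases eq_or_ne i (Fin.last m) with rfl | hi
  · have h0 : 0 < j := Fin.pos_iff_ne_zero.2 (by simpa using hj)
    rw [gapSeq, Fin.last_add_one, arcLen_of_le (hx.monotone (Fin.zero_le _)) (by linarith),
      arcLen_of_le (hx.monotone (Fin.le_last j)) (by linarith [hlt j (Fin.last m)])]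
    linarith [hx h0]
  have hsucc : i < i + 1 := by
    rw [Fin.lt_def, Fin.val_add_one_of_lt (lt_of_le_of_ne (Fin.le_last i) hi)]
    omega
  rw [gapSeq, arcLen_of_lt (hx hsucc) (by linarith [hlt i (i + 1)])]
  rcases lt_or_ge i j with hij | hji
  · rw [arcLen_of_lt (hx hij) (by linarith [hlt i j])]
    linarith [hx (lt_of_le_of_ne (Fin.add_one_le_of_lt hij) (Ne.symm hj))]
  · rw [arcLen_of_le (hx.monotone hji) (by linarith [hlt j i])]
    linarith [hlt j (i + 1)]

lemma gapSeq_eq_ite (hx : StrictMono x) (hspan : x (Fin.last m) - x 0 < 2 * π)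
    (i : Fin (m + 1)) :
    gapSeq x i = if (i : ℕ) < m then x (i + 1) - x i
      else 2 * π - (x (Fin.last m) - x 0) := by
  have hlt := sub_lt_two_pi hx hspan
  split_ifs with hi
  · have hsucc : i < i + 1 := by
      rw [Fin.lt_def, Fin.val_add_one_of_lt (Fin.lt_def.2 hi)]
      omega
    exact arcLen_of_lt (hx hsucc) (by linarith [hlt i (i + 1)])
  · obtain rfl : i = Fin.last m := Fin.ext (by have := i.isLt; simp; omega)
    rw [gapSeq, Fin.last_add_one, arcLen_of_le (hx.monotone (Fin.zero_le _)) (by linarith)]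
    ring

end Configuration

/-- Rotational symmetry of a configuration of `n` points on the unit circle corresponds to
nontrivial cyclic periodicity of its gap sequence. -/
theorem rotationallySymmetric_iff_periodic_gaps {n : ℕ} [NeZero n]
    (x : Fin n → ℝ) (hx : StrictMono x)
    (hspan : x ⟨n - 1, Nat.sub_lt (Nat.pos_of_ne_zero (NeZero.ne n)) Nat.one_pos⟩ - x 0
      < 2 * Real.pi)
    (θ : Fin n → ℝ)
    (hθ : ∀ i : Fin n, θ i =
      if (i : ℕ) < n - 1 then x (i + 1) - x i
      else 2 * Real.pi -
        (x ⟨n - 1, Nat.sub_lt (Nat.pos_of_ne_zero (NeZero.ne n)) Nat.one_pos⟩ - x 0)) :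
    (∃ u : ℂ, u ≠ 1 ∧
        (fun z : ℂ => u * z) '' (Set.range fun i : Fin n => Complex.exp (Complex.I * (x i)))
          = Set.range fun i : Fin n => Complex.exp (Complex.I * (x i))) ↔
    (∃ k : Fin n, k ≠ 0 ∧ rot k θ = θ) := by
  obtain ⟨m, rfl⟩ := Nat.exists_eq_succ_of_ne_zero (NeZero.ne n)
  have hspan' : x (Fin.last m) - x 0 < 2 * π := hspan
  obtain rfl : θ = gapSeq x := funext fun i => (hθ i).trans (gapSeq_eq_ite hx hspan' i).symm
  have hinj := injective_exp_I_mul hx hspan'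
  exact ⟨fun ⟨u, hu, hS⟩ =>
      exists_rot_gapSeq_eq_of_image_eq hinj (fun _ _ => gapSeq_lt_arcLen hx hspan') hu hS,
    fun ⟨k, hk, hper⟩ => exists_image_eq_of_rot_gapSeq_eq hinj hk hper⟩
end
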